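/- The linear functional φ : M → ℂ defined by φ(a) = α * τ₃(Aᴴ * a * A) is a state: φ(1) = 1 and, for every a ∈ M, φ(aᴴ * a) is a nonnegative real number. -/

import Mathlib

open Matrix Kronecker

noncomputable section

/-- The Pauli z-matrix. -/
def σz : Matrix (Fin 2) (Fin 2) ℂ := !![1, 0; 0, -1]

/-- The threefold tensor product `M₂ ⊗ M₂ ⊗ M₂`, realized via Kronecker products. -/
abbrev M3 : Type := Matrix (Fin 2 × Fin 2 × Fin 2) (Fin 2 × Fin 2 × Fin 2) ℂ

/-- `tp a b c` is the elementary tensor `a ⊗ b ⊗ c` in `M₂ ⊗ M₂ ⊗ M₂`. -/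
def tp (a b c : Matrix (Fin 2) (Fin 2) ℂ) : M3 := a ⊗ₖ (b ⊗ₖ c)

def K₀ (β : ℝ) : ℝ := (Real.exp β + 1) / 2
def K₃ (β : ℝ) : ℝ := (Real.exp β - 1) / 2
def R₀ (β J : ℝ) : ℝ := (Real.exp (J * β) + 1) / 2
def R₃ (β J : ℝ) : ℝ := (Real.exp (J * β) - 1) / 2

/-- `K¹² = K₀•(1⊗1⊗1) + K₃•(σ⊗σ⊗1)`. -/
def K12 (β : ℝ) : M3 := ((K₀ β : ℝ) : ℂ) • tp 1 1 1 + ((K₃ β : ℝ) : ℂ) • tp σz σz 1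

/-- `K¹³ = K₀•(1⊗1⊗1) + K₃•(σ⊗1⊗σ)`. -/
def K13 (β : ℝ) : M3 := ((K₀ β : ℝ) : ℂ) • tp 1 1 1 + ((K₃ β : ℝ) : ℂ) • tp σz 1 σz

/-- `L²³ = R₀•(1⊗1⊗1) + R₃•(1⊗σ⊗σ)`. -/
def L23 (β J : ℝ) : M3 := ((R₀ β J : ℝ) : ℂ) • tp 1 1 1 + ((R₃ β J : ℝ) : ℂ) • tp 1 σz σz

/-- The transfer operator `A = K¹² K¹³ L²³` of the Ising model with competing interactions. -/
def A (β J : ℝ) : M3 := K12 β * K13 β * L23 β J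

open scoped ComplexOrder

/-- The normalizing constant `α`. -/
def αc (β J : ℝ) : ℝ :=
  4 / (Real.exp (2 * J * β) * (Real.exp (4 * β) + 1) + 2 * Real.exp (2 * β))

/-- The normalized trace on `M₂ ⊗ M₂ ⊗ M₂`. -/
def τ₃ (m : M3) : ℂ := (1 / 8 : ℂ) * Matrix.trace m

/-- The functional `φ(a) = α τ₃(Aᴴ a A)`. -/
def φ (β J : ℝ) (a : M3) : ℂ := ((αc β J : ℝ) : ℂ) * τ₃ ((A β J)ᴴ * a * A β J)

/-!
`φ` is positive because `Aᴴ (aᴴ a) A = (a A)ᴴ (a A)` is positive semidefinite and `α > 0`.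
It is unital because `α = τ₃(Aᴴ A)⁻¹`, which is computed by expanding `A` in the tensors built
from `1` and `σ`; these are orthonormal for `τ₃`.
-/

lemma σz_mul_self : σz * σz = 1 := by
  ext i j; fin_cases i <;> fin_cases j <;> simp [σz, Matrix.mul_apply, Fin.sum_univ_two]

lemma σz_conjTranspose : σzᴴ = σz := by
  ext i j; fin_cases i <;> fin_cases j <;> simp [σz]

lemma trace_σz : trace σz = 0 := by simp [σz, trace_fin_two]

lemma tp_mul_tp (a b c d e f : Matrix (Fin 2) (Fin 2) ℂ) :
    tp a b c * tp d e f = tp (a * d) (b * e) (c * f) := by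
  simp only [tp, ← mul_kronecker_mul]

lemma tp_conjTranspose (a b c : Matrix (Fin 2) (Fin 2) ℂ) : (tp a b c)ᴴ = tp aᴴ bᴴ cᴴ := by
  simp only [tp, conjTranspose_kronecker]

lemma trace_tp (a b c : Matrix (Fin 2) (Fin 2) ℂ) :
    trace (tp a b c) = trace a * (trace b * trace c) := by
  simp only [tp, trace_kronecker]

lemma τ₃_nonneg {m : M3} (hm : m.PosSemidef) : 0 ≤ τ₃ m :=
  mul_nonneg (by norm_num [Complex.le_def]) hm.trace_nonneg

lemma αc_pos (β J : ℝ) : 0 < αc β J := by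
  unfold αc; positivity

lemma A_eq_sum_tp (β J : ℝ) : A β J =
    ((K₀ β * K₀ β * R₀ β J + K₃ β * K₃ β * R₃ β J : ℝ) : ℂ) • tp 1 1 1
  + ((K₀ β * K₃ β * R₀ β J + K₃ β * K₀ β * R₃ β J : ℝ) : ℂ) • tp σz 1 σz
  + ((K₃ β * K₀ β * R₀ β J + K₀ β * K₃ β * R₃ β J : ℝ) : ℂ) • tp σz σz 1
  + ((K₃ β * K₃ β * R₀ β J + K₀ β * K₀ β * R₃ β J : ℝ) : ℂ) • tp 1 σz σz := by
  simp only [A, K12, K13, L23, add_mul, mul_add, Matrix.smul_mul, Matrix.mul_smul, tp_mul_tp,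
    σz_mul_self, one_mul, mul_one, smul_smul]
  push_cast
  module

lemma trace_conjTranspose_mul_self_A (β J : ℝ) : trace ((A β J)ᴴ * A β J) =
    ((2 * (Real.exp (2 * J * β) * (Real.exp (4 * β) + 1) + 2 * Real.exp (2 * β)) : ℝ) : ℂ) := by
  have h2Jβ : Real.exp (2 * J * β) = Real.exp (J * β) ^ 2 := by
    rw [← Real.exp_nat_mul]; ring_nf
  have h4β : Real.exp (4 * β) = Real.exp β ^ 4 := by
    rw [← Real.exp_nat_mul]; ring_nf
  have h2β : Real.exp (2 * β) = Real.exp β ^ 2 := by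
    rw [← Real.exp_nat_mul]; ring_nf
  rw [h2Jβ, h4β, h2β, A_eq_sum_tp]
  simp only [conjTranspose_add, conjTranspose_smul, tp_conjTranspose, σz_conjTranspose,
    conjTranspose_one, Complex.star_def, Complex.conj_ofReal, add_mul, mul_add, Matrix.smul_mul,
    Matrix.mul_smul, tp_mul_tp, σz_mul_self, one_mul, mul_one, smul_smul, trace_add, trace_smul,
    trace_tp, trace_σz, trace_one, Fintype.card_fin, smul_eq_mul]
  simp only [K₀, K₃, R₀, R₃]
  push_cast
  ring

lemma τ₃_conjTranspose_mul_self_A (β J : ℝ) : τ₃ ((A β J)ᴴ * A β J) = ((αc β J)⁻¹ : ℝ) := by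
  rw [τ₃, trace_conjTranspose_mul_self_A, αc, inv_div]
  push_cast
  ring

theorem φ_is_state_general (β J : ℝ) :
    φ β J 1 = 1 ∧ ∀ a : M3, 0 ≤ φ β J (aᴴ * a) := by
  have hα : ((αc β J : ℝ) : ℂ) ≠ 0 := Complex.ofReal_ne_zero.mpr (αc_pos β J).ne'
  refine ⟨?_, fun a => ?_⟩
  · rw [φ, mul_one, τ₃_conjTranspose_mul_self_A, Complex.ofReal_inv, mul_inv_cancel₀ hα]
  · have hαpos : (0 : ℂ) ≤ (αc β J : ℂ) := Complex.zero_le_real.mpr (αc_pos β J).le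
    exact mul_nonneg hαpos <| τ₃_nonneg <|
      (posSemidef_conjTranspose_mul_self a).conjTranspose_mul_mul_same (A β J)

/-- `φ` is a state: it is unital and positive. -/
theorem φ_is_state (β J : ℝ) (hβ : 0 < β) (hJ : 0 < J) :
    φ β J 1 = 1 ∧ ∀ a : M3, 0 ≤ φ β J (aᴴ * a) :=
  φ_is_state_general β J
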